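/- arXiv:0705.2799 — 2 statements merged into one kernel-verified Lean document; each statement's English description precedes it below -/
import Mathlib

section
/- Let O_K be a discrete valuation ring with uniformizer π and fraction field K. Let A be a finite flat O_K-algebra such that A ⊗_{O_K} K is isomorphic, as a K-algebra, to a finite product of copies of K. Let R be a smooth O_K-algebra together with a surjective O_K-algebra homomorphism R ↠ A with kernel I. Then there exists a positive integer r such that, writing R^{(r)} for the integral closure in R ⊗_{O_K} K of the subalgebra R[π^{−r}I] generated by R and the elements π^{−r}x for x ∈ I, the image of R^{(r)} under the induced homomorphism R ⊗_{O_K} K → A ⊗_{O_K} K is exactly the integral closure of A in A ⊗_{O_K} K. -/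
open TensorProduct

set_option synthInstance.maxHeartbeats 1000000
set_option maxHeartbeats 1000000

/-- For a flat `O`-algebra `B`, an ideal `J ⊆ B` and an element `c` of the
fraction field `K` (typically `c = π^{-r}`), this is the subalgebra `B[c·J]`
of `B ⊗[O] K` generated by (the image of) `B` and the elements `c·x` for
`x ∈ J`. -/
noncomputable def Subalgebra.dilatation (O : Type) [CommRing O]
    (K : Type) [CommRing K] [Algebra O K]
    (B : Type) [CommRing B] [Algebra O B] (J : Ideal B) (c : K) :
    Subalgebra O (B ⊗[O] K) :=
  Algebra.adjoin O ((Set.range fun b : B => b ⊗ₜ[O] (1 : K)) ∪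
    ((fun x : B => x ⊗ₜ[O] c) '' (J : Set B)))

/-- The integral closure of a subalgebra `S ⊆ A`, viewed again as an
`O`-subalgebra of `A`. -/
noncomputable def Subalgebra.integralClosureIn (O : Type) [CommRing O]
    (A : Type) [CommRing A] [Algebra O A] (S : Subalgebra O A) :
    Subalgebra O A :=
  Subalgebra.restrictScalars O (integralClosure S A)

/-! Fix a splitting `A ⊗ K ≃ K^m`. An element of `A ⊗ K` integral over `A` has coordinates in `O`,
so it is an `O`-combination of the primitive idempotents `e_i`. Each `e_i` is of the form
`s x ⊗ π^{-n}`, and flatness of `A` turns `e_i² = e_i` into `x² - π^n x ∈ I`. Hence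
`y = x ⊗ π^{-n}` satisfies `y² - y = (x² - π^n x) ⊗ π^{-2n} ∈ R[π^{-r}I]` as soon as `2n ≤ r`, so
`y` is integral over `R[π^{-r}I]` and maps to `e_i`. Conversely `R[π^{-r}I]` maps into `A`, so its
integral closure maps into that of `A`. -/

theorem Subalgebra.map_integralClosureIn_le {O B : Type} {A C : Type*} [CommRing O] [CommRing B]
    [CommRing A] [CommRing C] [Algebra O B] [Algebra O A] [Algebra O C] [Algebra A C]
    [IsScalarTower O A C] (g : B →ₐ[O] C) (S : Subalgebra O B)
    (hS : S.map g ≤ (integralClosure A C).restrictScalars O) :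
    (Subalgebra.integralClosureIn O B S).map g ≤ (integralClosure A C).restrictScalars O := by
  rintro _ ⟨y, hy, rfl⟩
  let φ : S →ₐ[O] integralClosure A C :=
    (g.comp S.val).codRestrict ((integralClosure A C).restrictScalars O)
      fun x => hS ⟨x, x.2, rfl⟩
  exact isIntegral_trans (A := integralClosure A C) _
    (IsIntegral.map_of_comp_eq φ.toRingHom g.toRingHom rfl hy)

open Polynomial in
theorem Subalgebra.isIntegral_of_mul_self_sub_mem {R B : Type*} [CommRing R] [CommRing B]
    [Algebra R B] (S : Subalgebra R B) {y : B} (hy : y * y - y ∈ S) : IsIntegral S y := by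
  refine ⟨X ^ 2 - (X + C ⟨_, hy⟩), monic_X_pow_sub ?_, ?_⟩
  · exact (degree_add_le _ _).trans_lt
      (max_lt (degree_X_le.trans_lt (by norm_num)) (degree_C_le.trans_lt (by norm_num)))
  · simp [sq]

section Dilatation

variable {O K B : Type} [CommRing O] [CommRing K] [Algebra O K] [CommRing B] [Algebra O B]
  {A : Type*} [CommRing A] [Algebra O A]

theorem Subalgebra.tmul_smul_mem_dilatation {J : Ideal B} {w : B} (hw : w ∈ J) (c : K) (o : O) :
    w ⊗ₜ[O] (o • c) ∈ Subalgebra.dilatation O K B J c := by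
  rw [TensorProduct.tmul_smul]
  exact Subalgebra.smul_mem (Subalgebra.dilatation O K B J c)
    (Algebra.subset_adjoin (Or.inr ⟨w, hw, rfl⟩)) o

theorem Subalgebra.map_dilatation_le_range (s : B →ₐ[O] A) {J : Ideal B}
    (hJ : J ≤ RingHom.ker s) (c : K) :
    (Subalgebra.dilatation O K B J c).map (Algebra.TensorProduct.map s (AlgHom.id O K)) ≤
      (Algebra.TensorProduct.includeLeft : A →ₐ[O] A ⊗[O] K).range := by
  rw [Subalgebra.dilatation, AlgHom.map_adjoin, Algebra.adjoin_le_iff]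
  rintro _ ⟨_, ⟨b, rfl⟩ | ⟨w, hw, rfl⟩, rfl⟩
  · exact ⟨s b, rfl⟩
  · exact ⟨0, by simp [(RingHom.mem_ker).mp (hJ hw)]⟩

theorem Subalgebra.map_integralClosureIn_dilatation_le (s : B →ₐ[O] A) {J : Ideal B}
    (hJ : J ≤ RingHom.ker s) (c : K) :
    (Subalgebra.integralClosureIn O (B ⊗[O] K) (Subalgebra.dilatation O K B J c)).map
        (Algebra.TensorProduct.map s (AlgHom.id O K)) ≤
      (integralClosure A (A ⊗[O] K)).restrictScalars O :=
  Subalgebra.map_integralClosureIn_le _ _ <| (map_dilatation_le_range s hJ c).trans <|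
    by rintro _ ⟨a, rfl⟩; exact isIntegral_algebraMap

end Dilatation

section Uniformizer

variable {O K : Type*} [CommRing O] [Field K] [Algebra O K] {π : O}

theorem pow_smul_inv_pow_add (hπ : algebraMap O K π ≠ 0) (i j : ℕ) :
    π ^ j • (algebraMap O K π)⁻¹ ^ (i + j) = (algebraMap O K π)⁻¹ ^ i := by
  rw [Algebra.smul_def, map_pow, pow_add, mul_left_comm, ← mul_pow, mul_inv_cancel₀ hπ, one_pow,
    mul_one]

theorem exists_eq_mul_inv_pow [IsDomain O] [IsDiscreteValuationRing O] [IsFractionRing O K]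
    (hπ : Irreducible π) (x : K) :
    ∃ (o : O) (n : ℕ), x = algebraMap O K o * (algebraMap O K π)⁻¹ ^ n := by
  obtain ⟨a, b, hb, rfl⟩ := IsFractionRing.div_surjective (A := O) x
  obtain ⟨n, u, rfl⟩ := IsDiscreteValuationRing.eq_unit_mul_pow_irreducible
    (nonZeroDivisors.ne_zero hb) hπ
  refine ⟨a * ↑u⁻¹, n, ?_⟩
  simp only [map_mul, map_pow, map_units_inv, div_eq_mul_inv, mul_inv]
  ring

theorem TensorProduct.exists_eq_tmul_inv_pow [IsDomain O] [IsDiscreteValuationRing O]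
    [IsFractionRing O K] (hπ : Irreducible π) {M : Type*} [AddCommMonoid M] [Module O M]
    (z : M ⊗[O] K) : ∃ (m : M) (n : ℕ), z = m ⊗ₜ[O] ((algebraMap O K π)⁻¹ ^ n) := by
  have hπ0 : algebraMap O K π ≠ 0 :=
    (map_ne_zero_iff _ (IsFractionRing.injective O K)).mpr hπ.ne_zero
  induction z using TensorProduct.induction_on with
  | zero => exact ⟨0, 0, by simp⟩
  | tmul m x =>
    obtain ⟨o, n, rfl⟩ := exists_eq_mul_inv_pow hπ x
    refine ⟨o • m, n, ?_⟩
    rw [smul_tmul, _root_.Algebra.smul_def]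
  | add z₁ z₂ ih₁ ih₂ =>
    obtain ⟨m₁, n₁, rfl⟩ := ih₁
    obtain ⟨m₂, n₂, rfl⟩ := ih₂
    refine ⟨π ^ n₂ • m₁ + π ^ n₁ • m₂, n₁ + n₂, ?_⟩
    rw [add_tmul, smul_tmul, smul_tmul, pow_smul_inv_pow_add hπ0, add_comm n₁,
      pow_smul_inv_pow_add hπ0]

end Uniformizer

section Idempotent

variable {O K : Type*} [CommRing O] [Field K] [Algebra O K] [IsFractionRing O K] {π : O}
  {A : Type*} [CommRing A] [Algebra O A] [Module.Flat O A]

theorem mul_self_eq_pow_smul_of_isIdempotentElem_tmul (hπ : algebraMap O K π ≠ 0) {a : A}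
    {n : ℕ} (h : IsIdempotentElem (a ⊗ₜ[O] ((algebraMap O K π)⁻¹ ^ n))) :
    a * a = π ^ n • a := by
  apply Algebra.TensorProduct.includeLeft_injective (S := O) (B := K)
    (IsFractionRing.injective O K)
  have h₀ := pow_smul_inv_pow_add hπ 0
  simp only [zero_add, pow_zero] at h₀
  calc (a * a) ⊗ₜ[O] (1 : K)
      = π ^ (n + n) •
          ((a ⊗ₜ[O] ((algebraMap O K π)⁻¹ ^ n)) * (a ⊗ₜ[O] ((algebraMap O K π)⁻¹ ^ n))) := by
        rw [Algebra.TensorProduct.tmul_mul_tmul, ← pow_add, ← TensorProduct.tmul_smul, h₀]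
    _ = π ^ n • π ^ n • (a ⊗ₜ[O] ((algebraMap O K π)⁻¹ ^ n)) := by rw [h.eq, pow_add, mul_smul]
    _ = (π ^ n • a) ⊗ₜ[O] (1 : K) := by rw [← TensorProduct.tmul_smul, h₀, smul_tmul']

end Idempotent

theorem tmul_inv_pow_mem_map_integralClosureIn_dilatation {O K : Type} [CommRing O] [Field K]
    [Algebra O K] [IsFractionRing O K] {π : O} (hπ : algebraMap O K π ≠ 0)
    {A : Type*} [CommRing A] [Algebra O A] [Module.Flat O A]
    {R : Type} [CommRing R] [Algebra O R] (s : R →ₐ[O] A) (x : R) {n r : ℕ} (hnr : 2 * n ≤ r)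
    (he : IsIdempotentElem (s x ⊗ₜ[O] ((algebraMap O K π)⁻¹ ^ n))) :
    s x ⊗ₜ[O] ((algebraMap O K π)⁻¹ ^ n) ∈
      (Subalgebra.integralClosureIn O (R ⊗[O] K)
        (Subalgebra.dilatation O K R (RingHom.ker s) ((algebraMap O K π)⁻¹ ^ r))).map
        (Algebra.TensorProduct.map s (AlgHom.id O K)) := by
  refine ⟨x ⊗ₜ[O] ((algebraMap O K π)⁻¹ ^ n), ?_, rfl⟩
  have hker : x * x - π ^ n • x ∈ RingHom.ker s := by
    simp [RingHom.mem_ker, mul_self_eq_pow_smul_of_isIdempotentElem_tmul hπ he]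
  obtain ⟨j, rfl⟩ := Nat.exists_eq_add_of_le hnr
  have hsq : x ⊗ₜ[O] ((algebraMap O K π)⁻¹ ^ n) * x ⊗ₜ[O] ((algebraMap O K π)⁻¹ ^ n) -
      x ⊗ₜ[O] ((algebraMap O K π)⁻¹ ^ n) =
      (x * x - π ^ n • x) ⊗ₜ[O] (π ^ j • (algebraMap O K π)⁻¹ ^ (2 * n + j)) := by
    rw [pow_smul_inv_pow_add hπ, sub_tmul, Algebra.TensorProduct.tmul_mul_tmul, ← pow_add,
      TensorProduct.smul_tmul, two_mul, pow_smul_inv_pow_add hπ]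
  exact Subalgebra.isIntegral_of_mul_self_sub_mem _
    (hsq ▸ Subalgebra.tmul_smul_mem_dilatation hker _ _)

theorem AlgEquiv.mem_span_symm_single_of_isIntegral {O K C ι : Type*} [CommRing O]
    [IsIntegrallyClosed O] [Field K] [Algebra O K] [IsFractionRing O K] [CommRing C]
    [Algebra O C] [Fintype ι] [DecidableEq ι] (φ : C ≃ₐ[O] (ι → K)) {z : C}
    (hz : IsIntegral O z) :
    z ∈ Submodule.span O (Set.range fun i => φ.symm (Pi.single i 1)) := by
  have hcoord (i : ι) : ∃ o : O, algebraMap O K o = φ z i :=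
    IsIntegrallyClosed.isIntegral_iff.mp (hz.map ((Pi.evalAlgHom O _ i).comp φ.toAlgHom))
  choose o ho using hcoord
  have hz : z = ∑ i, o i • φ.symm (Pi.single i 1) := by
    apply φ.injective
    ext j
    simp [Finset.sum_apply, Pi.single_apply, ho, _root_.Algebra.smul_def]
  rw [hz]
  exact Submodule.sum_mem _ fun i _ => Submodule.smul_mem _ _ (Submodule.subset_span ⟨i, rfl⟩)

theorem statement_1_general
    (O : Type) [CommRing O] [IsDomain O] [IsDiscreteValuationRing O]
    (π : O) (hπ : Irreducible π)
    (K : Type) [Field K] [Algebra O K] [IsFractionRing O K]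
    (A : Type) [CommRing A] [Algebra O A] [Module.Finite O A] [Module.Flat O A]
    (m : ℕ) (hsplit : Nonempty ((K ⊗[O] A) ≃ₐ[K] (Fin m → K)))
    (R : Type) [CommRing R] [Algebra O R]
    (s : R →ₐ[O] A) (hs : Function.Surjective s) :
    ∃ r : ℕ, 0 < r ∧
      Subalgebra.map (Algebra.TensorProduct.map s (AlgHom.id O K))
          (Subalgebra.integralClosureIn O (R ⊗[O] K)
            (Subalgebra.dilatation O K R (RingHom.ker s) ((algebraMap O K π)⁻¹ ^ r)))
        = Subalgebra.restrictScalars O (integralClosure A (A ⊗[O] K)) := by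
  obtain ⟨ψ⟩ := hsplit
  let φ : (A ⊗[O] K) ≃ₐ[O] (Fin m → K) :=
    (Algebra.TensorProduct.comm O A K).trans (ψ.restrictScalars O)
  have hπ0 : algebraMap O K π ≠ 0 :=
    (map_ne_zero_iff _ (IsFractionRing.injective O K)).mpr hπ.ne_zero
  have hlift (i : Fin m) : ∃ (x : R) (n : ℕ),
      φ.symm (Pi.single i 1) = s x ⊗ₜ[O] ((algebraMap O K π)⁻¹ ^ n) := by
    obtain ⟨a, n, ha⟩ := TensorProduct.exists_eq_tmul_inv_pow hπ (φ.symm (Pi.single i 1))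
    obtain ⟨x, rfl⟩ := hs a
    exact ⟨x, n, ha⟩
  choose x n hx using hlift
  refine ⟨2 * Finset.univ.sup n + 1, Nat.succ_pos _,
    le_antisymm (Subalgebra.map_integralClosureIn_dilatation_le s le_rfl _) ?_⟩
  intro z hz
  have : Algebra.IsIntegral O A := Algebra.IsIntegral.of_finite O A
  rw [← Subalgebra.mem_toSubmodule]
  refine Submodule.span_le.mpr (Set.range_subset_iff.mpr fun i => ?_)
    (φ.mem_span_symm_single_of_isIntegral (isIntegral_trans z hz))
  have he : IsIdempotentElem (φ.symm (Pi.single i 1)) := by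
    rw [IsIdempotentElem, ← map_mul, ← Pi.single_mul, mul_one]
  rw [hx i] at he ⊢
  exact tmul_inv_pow_mem_map_integralClosureIn_dilatation hπ0 s (x i)
    (by have := Finset.le_sup (f := n) (Finset.mem_univ i); omega) he

/-- Let `O` be a DVR with uniformizer `π` and fraction field
`K`.  Let `A` be a finite flat `O`-algebra such that `A ⊗[O] K` is
`K`-isomorphic to a finite product of copies of `K`.  Let `R` be a smooth
`O`-algebra with a surjection `s : R → A`, with kernel `I = ker s`.  Then
there is a positive integer `r` such that the image of
`R⁽ʳ⁾ = integral closure of R[π^{-r}I] in R ⊗[O] K` under the induced map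
`R ⊗[O] K → A ⊗[O] K` is exactly the integral closure of `A` in `A ⊗[O] K`. -/
theorem statement_1
    (O : Type) [CommRing O] [IsDomain O] [IsDiscreteValuationRing O]
    (π : O) (hπ : Irreducible π)
    (K : Type) [Field K] [Algebra O K] [IsFractionRing O K]
    (A : Type) [CommRing A] [Algebra O A] [Module.Finite O A] [Module.Flat O A]
    (m : ℕ) (hsplit : Nonempty ((K ⊗[O] A) ≃ₐ[K] (Fin m → K)))
    (R : Type) [CommRing R] [Algebra O R] [Algebra.Smooth O R]
    (s : R →ₐ[O] A) (hs : Function.Surjective s) :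
    ∃ r : ℕ, 0 < r ∧
      Subalgebra.map (Algebra.TensorProduct.map s (AlgHom.id O K))
          (Subalgebra.integralClosureIn O (R ⊗[O] K)
            (Subalgebra.dilatation O K R (RingHom.ker s) ((algebraMap O K π)⁻¹ ^ r)))
        = Subalgebra.restrictScalars O (integralClosure A (A ⊗[O] K)) :=
  statement_1_general O π hπ K A m hsplit R s hs
end

section
/- Let O_K be a discrete valuation ring with uniformizer π and fraction field K. For i = 1, 2 let B_i be a smooth O_K-algebra with an O_K-algebra retraction σ_i : B_i → O_K and kernel I_i = ker σ_i. Let B = B_1 ⊗_{O_K} B_2 with the retraction σ = σ_1 ⊗ σ_2 and I = ker σ (so I = I_1·B + I_2·B). Then for every positive integer r, the canonical homomorphism B_1[π^{−r}I_1] ⊗_{O_K} B_2[π^{−r}I_2] → B[π^{−r}I], induced by the inclusions of B_i[π^{−r}I_i] into B ⊗_{O_K} K, is an isomorphism of O_K-algebras. -/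
/-! Over a discrete valuation ring torsion-free modules are flat, so the subalgebras
`Sᵢ ⊆ Bᵢ ⊗ K` are flat and `S₁ ⊗ S₂ → (B₁ ⊗ K) ⊗ (B₂ ⊗ K)` is injective; the target
is `(B₁ ⊗ B₂) ⊗ K` because `K ⊗ K = K`. The image is generated by `B ⊗ 1`,
`π^{-r} I₁ ⊗ 1` and `1 ⊗ π^{-r} I₂`, and these generate `B[π^{-r}I]` because
`I = I₁B + I₂B` (the `σᵢ` are onto). -/

open TensorProduct

set_option synthInstance.maxHeartbeats 1000000
set_option maxHeartbeats 1000000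

open Algebra.TensorProduct

namespace Subalgebra

variable {O K B B' : Type} [CommRing O] [CommRing K] [Algebra O K]
  [CommRing B] [Algebra O B] [CommRing B'] [Algebra O B']

theorem tmul_one_mem_dilatation (J : Ideal B) (c : K) (b : B) :
    b ⊗ₜ[O] (1 : K) ∈ dilatation O K B J c :=
  Algebra.subset_adjoin (Or.inl ⟨b, rfl⟩)

theorem tmul_mem_dilatation {J : Ideal B} (c : K) {x : B} (hx : x ∈ J) :
    x ⊗ₜ[O] c ∈ dilatation O K B J c :=
  Algebra.subset_adjoin (Or.inr ⟨x, hx, rfl⟩)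

theorem dilatation_le_of_le_span {J : Ideal B} {c : K} {T : Subalgebra O (B ⊗[O] K)}
    (hB : ∀ b : B, b ⊗ₜ[O] (1 : K) ∈ T) {s : Set B} (hJ : J ≤ Ideal.span s)
    (hs : ∀ x ∈ s, x ⊗ₜ[O] c ∈ T) :
    dilatation O K B J c ≤ T := by
  rw [dilatation, Algebra.adjoin_le_iff]
  rintro _ (⟨b, rfl⟩ | ⟨x, hx, rfl⟩)
  · exact hB b
  change x ⊗ₜ[O] c ∈ T
  replace hx := hJ hx
  induction hx using Submodule.span_induction with
  | mem x hx => exact hs x hx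
  | zero => simpa only [zero_tmul] using T.zero_mem
  | add x y _ _ hx hy => simpa only [add_tmul] using T.add_mem hx hy
  | smul b x _ hx =>
    have : (b * x) ⊗ₜ[O] c = (b ⊗ₜ[O] (1 : K)) * (x ⊗ₜ[O] c) := by
      rw [tmul_mul_tmul, one_mul]
    simpa only [smul_eq_mul, this] using T.mul_mem (hB b) hx

theorem map_dilatation_le (f : B →ₐ[O] B') {J : Ideal B} {J' : Ideal B'} (h : J ≤ J'.comap f)
    (c : K) :
    (dilatation O K B J c).map (Algebra.TensorProduct.map f (AlgHom.id O K)) ≤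
      dilatation O K B' J' c := by
  rw [dilatation, AlgHom.map_adjoin, Algebra.adjoin_le_iff]
  rintro _ ⟨_, ⟨b, rfl⟩ | ⟨x, hx, rfl⟩, rfl⟩
  · exact tmul_one_mem_dilatation J' c (f b)
  · exact tmul_mem_dilatation c (h hx)

theorem dilatation_tensorProduct {B₁ B₂ : Type} [CommRing B₁] [Algebra O B₁] [CommRing B₂]
    [Algebra O B₂] (J₁ : Ideal B₁) (J₂ : Ideal B₂) (c : K) :
    dilatation O K (B₁ ⊗[O] B₂)
        (J₁.map (includeLeft : B₁ →ₐ[O] B₁ ⊗[O] B₂) ⊔ J₂.map includeRight) c =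
      (dilatation O K B₁ J₁ c).map
          (Algebra.TensorProduct.map includeLeft (AlgHom.id O K)) ⊔
        (dilatation O K B₂ J₂ c).map
          (Algebra.TensorProduct.map includeRight (AlgHom.id O K)) := by
  refine le_antisymm (dilatation_le_of_le_span ?_ (s := includeLeft '' J₁ ∪ includeRight '' J₂)
    (by rw [Ideal.span_union]; rfl) ?_) (sup_le ?_ ?_)
  · intro b
    induction b with
    | zero => simpa only [zero_tmul] using zero_mem _
    | add x y hx hy => simpa only [add_tmul] using add_mem hx hy
    | tmul b₁ b₂ =>
      have : (b₁ ⊗ₜ[O] b₂) ⊗ₜ[O] (1 : K) =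
          Algebra.TensorProduct.map (includeLeft : B₁ →ₐ[O] B₁ ⊗[O] B₂) (AlgHom.id O K)
              (b₁ ⊗ₜ[O] 1) *
            Algebra.TensorProduct.map includeRight (AlgHom.id O K) (b₂ ⊗ₜ[O] 1) := by
        simp only [Algebra.TensorProduct.map_tmul, includeLeft_apply, includeRight_apply,
          AlgHom.id_apply, tmul_mul_tmul, mul_one, one_mul]
      rw [this]
      exact mul_mem
        (le_sup_left (α := Subalgebra O _) ⟨_, tmul_one_mem_dilatation J₁ c b₁, rfl⟩)
        (le_sup_right (α := Subalgebra O _) ⟨_, tmul_one_mem_dilatation J₂ c b₂, rfl⟩)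
  · rintro _ (⟨x, hx, rfl⟩ | ⟨x, hx, rfl⟩)
    · exact le_sup_left (α := Subalgebra O _) ⟨_, tmul_mem_dilatation c hx, rfl⟩
    · exact le_sup_right (α := Subalgebra O _) ⟨_, tmul_mem_dilatation c hx, rfl⟩
  · exact map_dilatation_le _ (Ideal.map_le_iff_le_comap.mp le_sup_left) c
  · exact map_dilatation_le _ (Ideal.map_le_iff_le_comap.mp le_sup_right) c

end Subalgebra

namespace Algebra.TensorProduct

theorem ker_productMap_of_retractions {R A C : Type} [CommRing R] [CommRing A] [CommRing C]
    [Algebra R A] [Algebra R C] (σ₁ : A →ₐ[R] R) (σ₂ : C →ₐ[R] R) :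
    RingHom.ker (productMap σ₁ σ₂) =
      (RingHom.ker σ₁).map (includeLeft : A →ₐ[R] A ⊗[R] C) ⊔
        (RingHom.ker σ₂).map includeRight := by
  have lmul'_injective : Function.Injective (lmul' R : R ⊗[R] R →ₐ[R] R) :=
    (TensorProduct.lid R R).injective
  rw [productMap_eq_comp_map, ← map_ker _ _ (fun r ↦ ⟨algebraMap R A r, σ₁.commutes r⟩)
    (fun r ↦ ⟨algebraMap R C r, σ₂.commutes r⟩)]
  exact RingHom.ker_comp_of_injective _ lmul'_injective

theorem productMap_comp_map {R A B C D S : Type} [CommRing R] [Ring A] [Ring B] [Ring C]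
    [Ring D] [CommRing S] [Algebra R A] [Algebra R B] [Algebra R C] [Algebra R D] [Algebra R S]
    (f : C →ₐ[R] S) (g : D →ₐ[R] S) (f' : A →ₐ[R] C) (g' : B →ₐ[R] D) :
    productMap (f.comp f') (g.comp g') = (productMap f g).comp (map f' g') := by
  ext <;> simp

theorem productMap_baseChange_includeLeft_includeRight_injective {O K B₁ B₂ : Type} [CommRing O]
    [CommRing K] [Algebra O K] (M : Submonoid O) [IsLocalization M K]
    [CommRing B₁] [CommRing B₂] [Algebra O B₁] [Algebra O B₂] :
    Function.Injective (productMap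
      (map (includeLeft : B₁ →ₐ[O] B₁ ⊗[O] B₂) (AlgHom.id O K))
      (map (includeRight : B₂ →ₐ[O] B₁ ⊗[O] B₂) (AlgHom.id O K))) := by
  have := IsLocalization.tensorProduct_compatibleSMul M K K K
  let e : (B₁ ⊗[O] K) ⊗[O] (B₂ ⊗[O] K) ≃ₐ[O] (B₁ ⊗[O] B₂) ⊗[O] K :=
    (tensorTensorTensorComm O O O O B₁ K B₂ K).trans
      (congr AlgEquiv.refl ((lmulEquiv O K).restrictScalars O))
  suffices productMap _ _ = e.toAlgHom from this ▸ e.injective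
  have lmulEquiv_tmul (a b : K) : lmulEquiv O K (a ⊗ₜ[O] b) = a * b := rfl
  ext <;> simp [e, Algebra.TensorProduct.one_def, lmulEquiv_tmul]

end Algebra.TensorProduct

theorem Module.Flat.tensorProduct_of_field {O K B : Type} [CommRing O] [Field K] [Algebra O K]
    [Module.Flat O K] [CommRing B] [Algebra O B] : Module.Flat O (B ⊗[O] K) :=
  have : Module.Flat O (K ⊗[O] B) := Module.Flat.trans O K (K ⊗[O] B)
  Module.Flat.of_linearEquiv (TensorProduct.comm O B K)

theorem statement_11_general
    (O : Type) [CommRing O] [IsDomain O] [IsDiscreteValuationRing O]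
    (π : O)
    (K : Type) [Field K] [Algebra O K] [IsFractionRing O K]
    (B₁ B₂ : Type) [CommRing B₁] [CommRing B₂] [Algebra O B₁] [Algebra O B₂]
    (σ₁ : B₁ →ₐ[O] O) (σ₂ : B₂ →ₐ[O] O)
    (r : ℕ)
    -- `B₁[π^{-r}I₁]`, `B₂[π^{-r}I₂]` and `B[π^{-r}I]` :
    (S₁ : Subalgebra O (B₁ ⊗[O] K)) (S₂ : Subalgebra O (B₂ ⊗[O] K))
    (S : Subalgebra O ((B₁ ⊗[O] B₂) ⊗[O] K))
    (hS₁ : S₁ = Subalgebra.dilatation O K B₁ (RingHom.ker σ₁)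
      (((algebraMap O K π)⁻¹) ^ r))
    (hS₂ : S₂ = Subalgebra.dilatation O K B₂ (RingHom.ker σ₂)
      (((algebraMap O K π)⁻¹) ^ r))
    (hS : S = Subalgebra.dilatation O K (B₁ ⊗[O] B₂)
      (RingHom.ker (Algebra.TensorProduct.productMap σ₁ σ₂))
      (((algebraMap O K π)⁻¹) ^ r))
    -- the inclusions `Bᵢ ⊗ K → B ⊗ K` :
    (ι₁ : (B₁ ⊗[O] K) →ₐ[O] ((B₁ ⊗[O] B₂) ⊗[O] K))
    (ι₂ : (B₂ ⊗[O] K) →ₐ[O] ((B₁ ⊗[O] B₂) ⊗[O] K))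
    (hι₁ : ι₁ = Algebra.TensorProduct.map
      (Algebra.TensorProduct.includeLeft : B₁ →ₐ[O] B₁ ⊗[O] B₂) (AlgHom.id O K))
    (hι₂ : ι₂ = Algebra.TensorProduct.map
      (Algebra.TensorProduct.includeRight : B₂ →ₐ[O] B₁ ⊗[O] B₂) (AlgHom.id O K))
    -- the canonical homomorphism `S₁ ⊗[O] S₂ → B ⊗ K` :
    (Φ : (S₁ ⊗[O] S₂) →ₐ[O] ((B₁ ⊗[O] B₂) ⊗[O] K))
    (hΦ : Φ = Algebra.TensorProduct.productMap (ι₁.comp S₁.val) (ι₂.comp S₂.val)) :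
    Function.Injective Φ ∧ Φ.range = S := by
  subst hΦ hι₁ hι₂ hS
  have : Module.Flat O K := IsLocalization.flat K (nonZeroDivisors O)
  have : Module.Flat O (B₁ ⊗[O] K) := .tensorProduct_of_field
  have : Module.Flat O (B₂ ⊗[O] K) := .tensorProduct_of_field
  constructor
  · rw [productMap_comp_map]
    -- `S₁` is flat, being torsion-free over a Dedekind domain
    exact (productMap_baseChange_includeLeft_includeRight_injective (nonZeroDivisors O)).comp
      (TensorProduct.map_injective_of_flat_flat' S₁.val.toLinearMap S₂.val.toLinearMap
        Subtype.val_injective Subtype.val_injective)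
  · rw [productMap_range, AlgHom.range_comp, AlgHom.range_comp, Subalgebra.range_val,
      Subalgebra.range_val, ker_productMap_of_retractions, Subalgebra.dilatation_tensorProduct,
      hS₁, hS₂]

/-- Let `O` be a DVR with uniformizer `π` and fraction field
`K`.  For `i = 1,2` let `Bᵢ` be a smooth `O`-algebra with a retraction
`σᵢ : Bᵢ → O`, with kernel `Iᵢ`.  Let `B = B₁ ⊗[O] B₂` with retraction
`σ = σ₁ ⊗ σ₂` and `I = ker σ`.  Then for every positive integer `r` the
canonical homomorphism `B₁[π^{-r}I₁] ⊗[O] B₂[π^{-r}I₂] → B[π^{-r}I]`,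
induced by the inclusions of `Bᵢ[π^{-r}Iᵢ]` into `B ⊗[O] K`, is an
isomorphism of `O`-algebras (i.e. it is injective with range `B[π^{-r}I]`). -/
theorem statement_11
    (O : Type) [CommRing O] [IsDomain O] [IsDiscreteValuationRing O]
    (π : O) (hπ : Irreducible π)
    (K : Type) [Field K] [Algebra O K] [IsFractionRing O K]
    (B₁ B₂ : Type) [CommRing B₁] [CommRing B₂] [Algebra O B₁] [Algebra O B₂]
    [Algebra.Smooth O B₁] [Algebra.Smooth O B₂]
    (σ₁ : B₁ →ₐ[O] O) (σ₂ : B₂ →ₐ[O] O)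
    (r : ℕ) (hr : 0 < r)
    -- `B₁[π^{-r}I₁]`, `B₂[π^{-r}I₂]` and `B[π^{-r}I]` :
    (S₁ : Subalgebra O (B₁ ⊗[O] K)) (S₂ : Subalgebra O (B₂ ⊗[O] K))
    (S : Subalgebra O ((B₁ ⊗[O] B₂) ⊗[O] K))
    (hS₁ : S₁ = Subalgebra.dilatation O K B₁ (RingHom.ker σ₁)
      (((algebraMap O K π)⁻¹) ^ r))
    (hS₂ : S₂ = Subalgebra.dilatation O K B₂ (RingHom.ker σ₂)
      (((algebraMap O K π)⁻¹) ^ r))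
    (hS : S = Subalgebra.dilatation O K (B₁ ⊗[O] B₂)
      (RingHom.ker (Algebra.TensorProduct.productMap σ₁ σ₂))
      (((algebraMap O K π)⁻¹) ^ r))
    -- the inclusions `Bᵢ ⊗ K → B ⊗ K` :
    (ι₁ : (B₁ ⊗[O] K) →ₐ[O] ((B₁ ⊗[O] B₂) ⊗[O] K))
    (ι₂ : (B₂ ⊗[O] K) →ₐ[O] ((B₁ ⊗[O] B₂) ⊗[O] K))
    (hι₁ : ι₁ = Algebra.TensorProduct.map
      (Algebra.TensorProduct.includeLeft : B₁ →ₐ[O] B₁ ⊗[O] B₂) (AlgHom.id O K))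
    (hι₂ : ι₂ = Algebra.TensorProduct.map
      (Algebra.TensorProduct.includeRight : B₂ →ₐ[O] B₁ ⊗[O] B₂) (AlgHom.id O K))
    -- the canonical homomorphism `S₁ ⊗[O] S₂ → B ⊗ K` :
    (Φ : (S₁ ⊗[O] S₂) →ₐ[O] ((B₁ ⊗[O] B₂) ⊗[O] K))
    (hΦ : Φ = Algebra.TensorProduct.productMap (ι₁.comp S₁.val) (ι₂.comp S₂.val)) :
    Function.Injective Φ ∧ Φ.range = S :=
  statement_11_general O π K B₁ B₂ σ₁ σ₂ r S₁ S₂ S hS₁ hS₂ hS ι₁ ι₂ hι₁ hι₂ Φ hΦ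
end
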